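/- Let g be a nonnegative multiplicative function with g(p^j) ≤ j+1 for all prime powers. There exists an absolute constant C such that for all real x, z ≥ 2, ∑_{n ≤ x, n z-smooth} g(n)/n ≫ exp(∑_{p ≤ z} g(p)/p) · (1 − C·exp(−log x / log z)). -/

import Mathlib

/-!
The squarefree numbers built from primes `p ≤ z` are `z`-smooth, and by multiplicativity their
contributions sum to `∏_{p ≤ z} (1 + g(p)/p) ≥ exp (∑ g(p)/p - ∑ (2/p)²) ≥ e⁻⁴ exp (∑ g(p)/p)`.
Those exceeding `x` are discarded by Rankin's trick with `ε = 1 / log z`: their total is at most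
`x^(-ε) ∏ (1 + g(p) p^ε / p)`, and as `p^ε ≤ 1 + 2 ε log p` for `p ≤ z`, the Chebyshev-type bound
`∑_{p ≤ z} log p / p ≤ 3 log z` makes this at most `e¹² exp (∑ g(p)/p) exp (-log x / log z)`.
-/

open scoped Classical

open Finset Real

open scoped Function

theorem exp_sub_sq_le_one_add {u : ℝ} (hu : 0 ≤ u) : exp (u - u ^ 2) ≤ 1 + u := by
  have hpos : 0 < 1 + u := by linarith
  have hlog : u - u ^ 2 ≤ log (1 + u) := calc
    u - u ^ 2 ≤ u / (1 + u) := by rw [le_div_iff₀ hpos]; nlinarith [pow_nonneg hu 3]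
    _ = 1 - (1 + u)⁻¹ := by field_simp; ring
    _ ≤ log (1 + u) := one_sub_inv_le_log_of_pos hpos
  exact (exp_le_exp.mpr hlog).trans_eq (exp_log hpos)

theorem exp_sum_sub_sum_sq_le_prod_one_add {ι : Type*} (s : Finset ι) {f : ι → ℝ}
    (hf : ∀ i ∈ s, 0 ≤ f i) : exp (∑ i ∈ s, f i - ∑ i ∈ s, f i ^ 2) ≤ ∏ i ∈ s, (1 + f i) := by
  rw [← sum_sub_distrib, exp_sum]
  exact prod_le_prod (fun i _ => (exp_pos _).le) fun i hi => exp_sub_sq_le_one_add (hf i hi)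

theorem rpow_le_one_add_two_mul_log {a ε : ℝ} (ha : 1 ≤ a) (hε : 0 ≤ ε) (h : ε * log a ≤ 1) :
    a ^ ε ≤ 1 + 2 * (ε * log a) := by
  rw [rpow_def_of_pos (by linarith), mul_comm]
  have := exp_bound' (mul_nonneg hε (log_nonneg ha)) h one_pos
  norm_num at this
  linarith

theorem sum_inv_sq_le_one_of_two_le {s : Finset ℕ} (hs : ∀ n ∈ s, 2 ≤ n) :
    ∑ n ∈ s, ((n : ℝ) ^ 2)⁻¹ ≤ 1 := by
  have hsub : s ⊆ Ioo 1 (s.sup id + 1) := fun n hn =>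
    mem_Ioo.mpr ⟨hs n hn, Nat.lt_succ_of_le (le_sup (f := id) hn)⟩
  calc ∑ n ∈ s, ((n : ℝ) ^ 2)⁻¹ ≤ ∑ n ∈ Ioo 1 (s.sup id + 1), ((n : ℝ) ^ 2)⁻¹ :=
        sum_le_sum_of_subset_of_nonneg hsub fun _ _ _ => by positivity
    _ ≤ 2 / ((1 : ℕ) + 1) := sum_Ioo_inv_sq_le 1 _
    _ = 1 := by norm_num

theorem map_prod_of_pairwise_coprime {R : Type*} [CommMonoid R] {g : ℕ → R} (hg1 : g 1 = 1)
    (hmul : ∀ m n : ℕ, Nat.Coprime m n → g (m * n) = g m * g n) {ι : Type*} (f : ι → ℕ)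
    (s : Finset ι) (hs : (s : Set ι).Pairwise (Nat.Coprime on f)) :
    g (∏ i ∈ s, f i) = ∏ i ∈ s, g (f i) := by
  induction s using Finset.induction_on with
  | empty => simpa using hg1
  | insert a s has ih =>
    rw [coe_insert, Set.pairwise_insert_of_symm] at hs
    rw [prod_insert has, prod_insert has, hmul _ _ (Nat.Coprime.prod_right fun i hi =>
      hs.2 _ hi (ne_of_mem_of_not_mem hi has).symm), ih hs.1]

theorem sum_powerset_filter_lt_prod_le {ι : Type*} (s : Finset ι) {a f : ι → ℝ}
    (ha : ∀ i ∈ s, 0 ≤ a i) (hf : ∀ i ∈ s, 0 ≤ f i) {x ε : ℝ} (hx : 0 < x) (hε : 0 ≤ ε) :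
    ∑ A ∈ s.powerset with x < ∏ i ∈ A, a i, ∏ i ∈ A, f i ≤
      x ^ (-ε) * ∏ i ∈ s, (1 + f i * a i ^ ε) := by
  have hterm : ∀ A ⊆ s, x < ∏ i ∈ A, a i →
      ∏ i ∈ A, f i ≤ x ^ (-ε) * ∏ i ∈ A, f i * a i ^ ε := by
    intro A hAs hxA
    have hratio : 1 ≤ x ^ (-ε) * (∏ i ∈ A, a i) ^ ε := by
      rw [rpow_neg hx.le, inv_mul_eq_div, one_le_div (by positivity)]
      exact rpow_le_rpow hx.le hxA.le hε
    calc ∏ i ∈ A, f i ≤ x ^ (-ε) * (∏ i ∈ A, a i) ^ ε * ∏ i ∈ A, f i :=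
          le_mul_of_one_le_left (prod_nonneg fun i hi => hf i (hAs hi)) hratio
      _ = x ^ (-ε) * ∏ i ∈ A, f i * a i ^ ε := by
          rw [← finsetProd_rpow _ _ fun i hi => ha i (hAs hi), prod_mul_distrib]
          ring
  calc _ ≤ ∑ A ∈ s.powerset with x < ∏ i ∈ A, a i, x ^ (-ε) * ∏ i ∈ A, f i * a i ^ ε :=
        sum_le_sum fun A hA => hterm A (mem_powerset.mp (mem_filter.mp hA).1) (mem_filter.mp hA).2
    _ ≤ ∑ A ∈ s.powerset, x ^ (-ε) * ∏ i ∈ A, f i * a i ^ ε :=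
        sum_le_sum_of_subset_of_nonneg (filter_subset _ _) fun A hA _ =>
          mul_nonneg (by positivity) (prod_nonneg fun i hi =>
            mul_nonneg (hf i (mem_powerset.mp hA hi))
              (rpow_nonneg (ha i (mem_powerset.mp hA hi)) _))
    _ = x ^ (-ε) * ∏ i ∈ s, (1 + f i * a i ^ ε) := by rw [← mul_sum, prod_one_add]

theorem sum_primesLE_div_mul_log_le_log_factorial (n : ℕ) :
    ∑ p ∈ n.primesLE, ((n / p : ℕ) : ℝ) * log p ≤ log (n.factorial : ℕ) := by
  rw [log_nat_eq_sum_factorization, Finsupp.sum, Nat.support_factorization]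
  have hsub : n.primesLE ⊆ n.factorial.primeFactors := fun p hp => by
    obtain ⟨hpn, hp⟩ := Nat.mem_primesLE.mp hp
    exact Nat.mem_primeFactors.mpr ⟨hp, Nat.dvd_factorial hp.pos hpn, n.factorial_ne_zero⟩
  refine (sum_le_sum fun p hp => ?_).trans
    (sum_le_sum_of_subset_of_nonneg hsub fun p _ _ => by positivity)
  obtain ⟨hpn, hp⟩ := Nat.mem_primesLE.mp hp
  gcongr
  rw [Nat.factorization_factorial hp (Nat.lt_succ_self _)]
  simpa using single_le_sum (f := fun i => n / p ^ i) (fun _ _ => Nat.zero_le _)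
    (mem_Ico.mpr ⟨le_rfl, Nat.succ_lt_succ (Nat.log_pos hp.one_lt hpn)⟩)

theorem sum_primesLE_log_div_le (n : ℕ) :
    ∑ p ∈ n.primesLE, log p / p ≤ log n + log 4 := by
  rcases n.eq_zero_or_pos with rfl | hn
  · simpa [Nat.primesLE] using log_nonneg (by norm_num : (1 : ℝ) ≤ 4)
  have hn' : (0 : ℝ) < n := by exact_mod_cast hn
  have hfloor : ∀ p ∈ n.primesLE, (n : ℝ) / p ≤ ((n / p : ℕ) : ℝ) + 1 := fun p _ => by
    rw [← Nat.floor_div_eq_div (K := ℝ)]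
    exact (Nat.lt_floor_add_one _).le
  rw [← mul_le_mul_iff_of_pos_left hn']
  calc (n : ℝ) * ∑ p ∈ n.primesLE, log p / p = ∑ p ∈ n.primesLE, (n : ℝ) / p * log p := by
        rw [mul_sum]; congr! 1; ring
    _ ≤ ∑ p ∈ n.primesLE, (((n / p : ℕ) : ℝ) + 1) * log p :=
        sum_le_sum fun p hp => mul_le_mul_of_nonneg_right (hfloor p hp) (log_natCast_nonneg p)
    _ = ∑ p ∈ n.primesLE, ((n / p : ℕ) : ℝ) * log p + Chebyshev.theta n := by
        rw [Chebyshev.theta_eq_sum_primesLE_log, ← sum_add_distrib]; congr! 1; ring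
    _ ≤ log (n.factorial : ℕ) + log 4 * n :=
        add_le_add (sum_primesLE_div_mul_log_le_log_factorial n)
          (Chebyshev.theta_le_log4_mul_x hn'.le)
    _ ≤ n * log n + log 4 * n := by
        gcongr
        calc log (n.factorial : ℕ) ≤ log ((n ^ n : ℕ) : ℝ) := by
              gcongr
              exact n.factorial_le_pow
          _ = n * log n := by push_cast; rw [log_pow]
    _ = n * (log n + log 4) := by ring

theorem sum_primes_le_floor_log_div_le {z : ℝ} (hz : 2 ≤ z) :
    ∑ p ∈ (Iic ⌊z⌋₊).filter Nat.Prime, log p / p ≤ 3 * log z := by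
  have hP : (Iic ⌊z⌋₊).filter Nat.Prime = Nat.primesLE ⌊z⌋₊ := by
    ext p; simp [Nat.mem_primesLE]
  have hlog4 : log 4 ≤ 2 * log z := by
    rw [show (4 : ℝ) = 2 ^ 2 by norm_num, log_pow]
    push_cast
    gcongr
  have hfloor : log ⌊z⌋₊ ≤ log z :=
    log_le_log (by exact_mod_cast Nat.floor_pos.mpr (by linarith)) (Nat.floor_le (by linarith))
  rw [hP]
  linarith [sum_primesLE_log_div_le ⌊z⌋₊]

theorem sum_powerset_le_sum_smooth {g : ℕ → ℝ} (hg1 : g 1 = 1)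
    (hmul : ∀ m n : ℕ, Nat.Coprime m n → g (m * n) = g m * g n) (hg0 : ∀ n, 0 ≤ g n)
    {P : Finset ℕ} (hP : ∀ p ∈ P, p.Prime) {x z : ℝ} (hPz : ∀ p ∈ P, (p : ℝ) ≤ z) :
    ∑ A ∈ P.powerset with (∏ p ∈ A, ((p : ℕ) : ℝ)) ≤ x, ∏ p ∈ A, g p / p ≤
      ∑ n ∈ (Icc 1 ⌊x⌋₊).filter (fun n => ∀ p : ℕ, p.Prime → p ∣ n → (p : ℝ) ≤ z), g n / n := by
  have hprimes : ∀ A ∈ P.powerset, ∀ p ∈ A, p.Prime := fun A hA p hp =>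
    hP p (mem_powerset.mp hA hp)
  have hval : ∀ A ∈ P.powerset, ∏ p ∈ A, g p / p = g (∏ p ∈ A, p) / (∏ p ∈ A, p : ℕ) := by
    intro A hA
    have hcop : (A : Set ℕ).Pairwise (Nat.Coprime on id) := fun p hp q hq hpq =>
      (Nat.coprime_primes (hprimes A hA p hp) (hprimes A hA q hq)).mpr hpq
    have hmulA := map_prod_of_pairwise_coprime hg1 hmul id A hcop
    simp only [id] at hmulA
    rw [hmulA, Nat.cast_prod, prod_div_distrib]
  have hinj : Set.InjOn (fun A : Finset ℕ => ∏ p ∈ A, p) (P.powerset : Set (Finset ℕ)) :=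
      fun A hA B hB h => by
    rw [← Nat.primeFactors_prod (hprimes A hA), ← Nat.primeFactors_prod (hprimes B hB)]
    exact congrArg _ h
  calc _ = ∑ n ∈ (P.powerset.filter fun A => (∏ p ∈ A, ((p : ℕ) : ℝ)) ≤ x).image
          (fun A => ∏ p ∈ A, p), g n / n := by
        rw [sum_image (hinj.mono (coe_subset.mpr (filter_subset _ _)))]
        exact sum_congr rfl fun A hA => hval A (filter_subset _ _ hA)
    _ ≤ _ := by
        refine sum_le_sum_of_subset_of_nonneg ?_ fun n _ _ => div_nonneg (hg0 n) n.cast_nonneg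
        intro n hn
        obtain ⟨A, hA, rfl⟩ := mem_image.mp hn
        obtain ⟨hAP, hAx⟩ := mem_filter.mp hA
        have hne : ∏ p ∈ A, p ≠ 0 :=
          prod_ne_zero_iff.mpr fun p hp => (hprimes A hAP p hp).ne_zero
        refine mem_filter.mpr ⟨mem_Icc.mpr ⟨Nat.one_le_iff_ne_zero.mpr hne,
          Nat.le_floor (by push_cast; exact hAx)⟩, fun q hq hdvd => hPz q ?_⟩
        have hqA : q ∈ (∏ p ∈ A, p).primeFactors := Nat.mem_primeFactors.mpr ⟨hq, hdvd, hne⟩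
        rw [Nat.primeFactors_prod (hprimes A hAP)] at hqA
        exact mem_powerset.mp hAP hqA

theorem exp_sub_four_le_prod_one_add {P : Finset ℕ} (hP : ∀ p ∈ P, 2 ≤ p) {g : ℕ → ℝ}
    (hg0 : ∀ p ∈ P, 0 ≤ g p) (hg2 : ∀ p ∈ P, g p ≤ 2) :
    exp (∑ p ∈ P, g p / p - 4) ≤ ∏ p ∈ P, (1 + g p / p) := by
  have hsq : ∑ p ∈ P, (g p / p) ^ 2 ≤ 4 := calc
    ∑ p ∈ P, (g p / p) ^ 2 ≤ ∑ p ∈ P, 4 * ((p : ℝ) ^ 2)⁻¹ := by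
      refine sum_le_sum fun p hp => ?_
      rw [div_pow, div_eq_mul_inv]
      gcongr
      nlinarith [hg0 p hp, hg2 p hp]
    _ ≤ 4 := by
      rw [← mul_sum]
      linarith [sum_inv_sq_le_one_of_two_le hP]
  refine (exp_le_exp.mpr ?_).trans
    (exp_sum_sub_sum_sq_le_prod_one_add P fun p hp => div_nonneg (hg0 p hp) (Nat.cast_nonneg p))
  linarith

theorem prod_one_add_mul_rpow_inv_log_le {g : ℕ → ℝ} (hg0 : ∀ n, 0 ≤ g n)
    (hg2 : ∀ p : ℕ, p.Prime → g p ≤ 2) {z : ℝ} (hz : 2 ≤ z) :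
    ∏ p ∈ (Iic ⌊z⌋₊).filter Nat.Prime, (1 + g p / p * (p : ℝ) ^ (log z)⁻¹) ≤
      exp (∑ p ∈ (Iic ⌊z⌋₊).filter Nat.Prime, g p / p + 12) := by
  set ε := (log z)⁻¹
  have hlogz : 0 < log z := log_pos (by linarith)
  have hterm : ∀ p ∈ (Iic ⌊z⌋₊).filter Nat.Prime,
      g p / p * (p : ℝ) ^ ε ≤ g p / p + 4 * ε * (log p / p) := by
    intro p hp
    obtain ⟨hpz, hp⟩ := mem_filter.mp hp
    have hp1 : (1 : ℝ) ≤ p := by exact_mod_cast hp.one_lt.le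
    have hεp : ε * log p ≤ 1 := by
      rw [inv_mul_le_one₀ hlogz]
      exact log_le_log (by linarith) ((Nat.le_floor_iff (by linarith)).mp (mem_Iic.mp hpz))
    calc g p / p * (p : ℝ) ^ ε ≤ g p / p * (1 + 2 * (ε * log p)) :=
          mul_le_mul_of_nonneg_left (rpow_le_one_add_two_mul_log hp1 (by positivity) hεp)
            (div_nonneg (hg0 p) p.cast_nonneg)
      _ = g p / p + 2 * ε * g p * (log p / p) := by ring
      _ ≤ g p / p + 2 * ε * 2 * (log p / p) := by
          gcongr
          exact hg2 p hp
      _ = g p / p + 4 * ε * (log p / p) := by ring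
  refine (prod_one_add_le_exp_sum _ fun p =>
    mul_nonneg (div_nonneg (hg0 p) p.cast_nonneg) (rpow_nonneg p.cast_nonneg _)).trans
    (exp_le_exp.mpr ?_)
  calc ∑ p ∈ (Iic ⌊z⌋₊).filter Nat.Prime, g p / p * (p : ℝ) ^ ε
      ≤ ∑ p ∈ (Iic ⌊z⌋₊).filter Nat.Prime, (g p / p + 4 * ε * (log p / p)) := sum_le_sum hterm
    _ ≤ ∑ p ∈ (Iic ⌊z⌋₊).filter Nat.Prime, g p / p + 4 * ε * (3 * log z) := by
        rw [sum_add_distrib, ← mul_sum]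
        gcongr
        exact sum_primes_le_floor_log_div_le hz
    _ = ∑ p ∈ (Iic ⌊z⌋₊).filter Nat.Prime, g p / p + 12 := by
        linear_combination 12 * inv_mul_cancel₀ hlogz.ne'

theorem prod_one_add_le_sum_smooth_add {g : ℕ → ℝ} (hg1 : g 1 = 1)
    (hmul : ∀ m n : ℕ, Nat.Coprime m n → g (m * n) = g m * g n) (hg0 : ∀ n, 0 ≤ g n)
    {P : Finset ℕ} (hP : ∀ p ∈ P, p.Prime) {x z ε : ℝ} (hPz : ∀ p ∈ P, (p : ℝ) ≤ z)
    (hx : 0 < x) (hε : 0 ≤ ε) :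
    ∏ p ∈ P, (1 + g p / p) ≤
      ∑ n ∈ (Icc 1 ⌊x⌋₊).filter (fun n => ∀ p : ℕ, p.Prime → p ∣ n → (p : ℝ) ≤ z), g n / n +
        x ^ (-ε) * ∏ p ∈ P, (1 + g p / p * (p : ℝ) ^ ε) := by
  rw [prod_one_add, ← sum_filter_add_sum_filter_not _ fun A => (∏ p ∈ A, ((p : ℕ) : ℝ)) ≤ x]
  simp only [not_le]
  exact add_le_add (sum_powerset_le_sum_smooth hg1 hmul hg0 hP hPz)
    (sum_powerset_filter_lt_prod_le P (fun p _ => p.cast_nonneg)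
      (fun p _ => div_nonneg (hg0 p) p.cast_nonneg) hx hε)

theorem smooth_sum_lower_bound_exp :
    ∃ c : ℝ, 0 < c ∧ ∃ C : ℝ, 0 < C ∧
      ∀ g : ℕ → ℝ, g 1 = 1 → (∀ m n : ℕ, Nat.Coprime m n → g (m * n) = g m * g n) →
        (∀ n : ℕ, 0 ≤ g n) → (∀ p j : ℕ, p.Prime → 1 ≤ j → g (p ^ j) ≤ j + 1) →
        ∀ x z : ℝ, 2 ≤ x → 2 ≤ z →
          ∑ n ∈ (Finset.Icc 1 ⌊x⌋₊).filter
              (fun n => ∀ p : ℕ, p.Prime → p ∣ n → (p : ℝ) ≤ z), g n / n ≥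
            c * Real.exp (∑ p ∈ (Finset.Iic ⌊z⌋₊).filter Nat.Prime, g p / p) *
              (1 - C * Real.exp (-(Real.log x / Real.log z))) := by
  refine ⟨exp (-4), exp_pos _, exp 16, exp_pos _, fun g hg1 hmul hg0 hgpj x z hx hz => ?_⟩
  set P := (Iic ⌊z⌋₊).filter Nat.Prime
  set S := ∑ p ∈ P, g p / p
  have hP : ∀ p ∈ P, p.Prime := fun p hp => (mem_filter.mp hp).2
  have hPz : ∀ p ∈ P, (p : ℝ) ≤ z := fun p hp =>
    (Nat.le_floor_iff (by linarith)).mp (mem_Iic.mp (mem_filter.mp hp).1)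
  have hg2 : ∀ p : ℕ, p.Prime → g p ≤ 2 := fun p hp => by
    simpa [one_add_one_eq_two] using hgpj p 1 hp le_rfl
  have hdecomp := prod_one_add_le_sum_smooth_add hg1 hmul hg0 hP hPz (x := x)
    (by linarith) (inv_nonneg.mpr (log_nonneg (by linarith : (1 : ℝ) ≤ z)))
  have hlow := exp_sub_four_le_prod_one_add (fun p hp => (hP p hp).two_le)
    (fun p _ => hg0 p) fun p hp => hg2 p (hP p hp)
  have hup := mul_le_mul_of_nonneg_left (prod_one_add_mul_rpow_inv_log_le hg0 hg2 hz)
    (rpow_nonneg (by linarith : (0 : ℝ) ≤ x) (-(log z)⁻¹))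
  have hrpow : x ^ (-(log z)⁻¹) = exp (-(log x / log z)) := by
    rw [rpow_def_of_pos (by linarith)]; ring_nf
  rw [ge_iff_le, ← hrpow]
  calc exp (-4) * exp S * (1 - exp 16 * x ^ (-(log z)⁻¹))
      = exp (S - 4) - x ^ (-(log z)⁻¹) * exp (S + 12) := by
        rw [exp_sub, exp_add, show (16 : ℝ) = 4 + 12 by norm_num, exp_add, exp_neg]
        field_simp
    _ ≤ _ := by linarith
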